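/- Let R0 and F0 be dual Dyck sequences with rowsert(R0,F0) = (E,R). Then di(R0 ⧺ F0) = di(E ⧺ R), where ⧺ denotes concatenation of sequences. -/

import Mathlib

/-- A finite integer sequence is a *dual Dyck sequence* if each entry is at
least the previous entry plus 2. The empty sequence is allowed. -/
def DualDyck (x : List ℤ) : Prop := List.Chain' (fun a b => a + 2 ≤ b) x

/-- `di x` is the number of pairs `i < j` with `x i = x j + 1`. -/
def di (x : List ℤ) : ℕ :=
  ((Finset.range x.length ×ˢ Finset.range x.length).filter
    (fun p => p.1 < p.2 ∧ x.getD p.1 0 = x.getD p.2 0 + 1)).card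

/-- Length of the maximal `+2`-chain starting at the first position. -/
def chainUp : List ℤ → ℕ
  | [] => 0
  | [_] => 1
  | a :: b :: t => if b = a + 2 then chainUp (b :: t) + 1 else 1

/-- One step of row insertion.  The state is the current row `R` and the
current input with head `a` and tail `F`.  The result is
`(newly evicted block, new row, new remaining input)`. -/
def rowsertStep (R : List ℤ) (a : ℤ) (F : List ℤ) :
    List ℤ × List ℤ × List ℤ :=
  match R.findIdx? (fun r => decide (a ≤ r + 1)) with
  | none => ([], R ++ [a], F)                                   -- Case 0
  | some i =>
    let ri := R.getD i 0
    if a ≤ ri then ([ri], R.set i a, F)                         -- Case 1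
    else
      let j := chainUp (R.drop i)
      let k := chainUp (a :: F)
      if j ≤ k then                                             -- Case 2
        ((R.drop i).take j,
         R.take i ++ (a :: F).take j ++ R.drop (i + j),
         (a :: F).drop j)
      else                                                      -- Case 3
        ((a :: F).take k, R, (a :: F).drop k)

/-- Fuel-indexed run of row insertion on state `(E, R, F)`. -/
def rowsertAux : ℕ → List ℤ → List ℤ → List ℤ → List ℤ × List ℤ
  | 0, E, R, _ => (E, R)
  | _ + 1, E, R, [] => (E, R)
  | fuel + 1, E, R, a :: F =>
      let s := rowsertStep R a F
      rowsertAux fuel (E ++ s.1) s.2.1 s.2.2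

/-- Row insertion `rowsert(R₀, F₀) = (E, R)`. -/
def rowsert (R0 F0 : List ℤ) : List ℤ × List ℤ :=
  rowsertAux F0.length [] R0 F0

/-!
`di (E ++ R ++ F)` is invariant along the insertion loop. Since
`di (u ++ v) = di u + di v + cross u v`, exchanging two adjacent blocks `v`, `w` of a word
changes `di` by `cross w v - cross v w`. Every step of row insertion rearranges the word
`E ++ R ++ F` by such exchanges, and each exchanged pair is either of blocks whose entries
differ by at least `2` (both crosses vanish) or, in Case 3, of the interleaved chains
`c, c + 2, …, c + 2(j - 1)` and `c + 1, …, c + 2k - 1` with `k < j`, where both crosses equal `k`.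
Maximality of the chain taken from the row keeps the rest of the row at least `2` above the
chain taken from the input.
-/

lemma sum_range_length_ite_getD {α : Type*} (l : List α) (d : α) (p : α → Prop)
    [DecidablePred p] :
    ∑ j ∈ Finset.range l.length, (if p (l.getD j d) then 1 else 0) = l.countP (fun x => p x) := by
  induction l with
  | nil => simp
  | cons a l ih =>
    rw [List.length_cons, Finset.sum_range_succ', List.countP_cons]
    simp only [List.getD_cons_succ, List.getD_cons_zero, ih, decide_eq_true_eq]

@[simp] lemma di_nil : di [] = 0 := rfl

lemma di_cons (a : ℤ) (l : List ℤ) : di (a :: l) = l.count (a - 1) + di l := by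
  have hcount : l.count (a - 1) =
      ∑ j ∈ Finset.range l.length, if a = l.getD j 0 + 1 then 1 else 0 := by
    rw [sum_range_length_ite_getD l 0 (fun b => a = b + 1), List.count_eq_countP]
    exact List.countP_congr fun x _ => by simp; omega
  simp only [di, Finset.card_filter, Finset.sum_product, List.length_cons, Finset.sum_range_succ',
    List.getD_cons_succ, List.getD_cons_zero, add_lt_add_iff_right, Nat.not_lt_zero, false_and,
    if_false, add_zero, Nat.zero_lt_succ, true_and, hcount]
  ring

def cross (A B : List ℤ) : ℕ := (A.map fun x => B.count (x - 1)).sum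

lemma cross_cons_left (a : ℤ) (A B : List ℤ) :
    cross (a :: A) B = B.count (a - 1) + cross A B := by
  simp [cross]

lemma cross_append_left (A A' B : List ℤ) : cross (A ++ A') B = cross A B + cross A' B := by
  simp [cross]

lemma cross_append_right (A B B' : List ℤ) : cross A (B ++ B') = cross A B + cross A B' := by
  simp [cross, List.count_append, List.sum_map_add]

lemma cross_singleton_right (A : List ℤ) (b : ℤ) : cross A [b] = A.count (b + 1) := by
  induction A with
  | nil => rfl
  | cons a A ih =>
    simp only [cross_cons_left, ih, List.count_cons, List.count_nil, beq_iff_eq]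
    split_ifs <;> omega

lemma cross_eq_sum_map_count (A B : List ℤ) :
    cross A B = (B.map fun y => A.count (y + 1)).sum := by
  induction B with
  | nil => simp [cross]
  | cons b B ih =>
    rw [← List.singleton_append, cross_append_right, cross_singleton_right, ih]
    simp

lemma cross_eq_zero {A B : List ℤ} (h : ∀ x ∈ A, x - 1 ∉ B) : cross A B = 0 := by
  simp only [cross, List.sum_eq_zero_iff, List.mem_map]
  rintro _ ⟨x, hx, rfl⟩
  exact List.count_eq_zero.2 (h x hx)

lemma cross_eq_length_left {A B : List ℤ} (hB : B.Nodup) (h : ∀ x ∈ A, x - 1 ∈ B) :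
    cross A B = A.length := by
  rw [cross, List.map_congr_left fun x hx => List.count_eq_one_of_mem hB (h x hx)]
  simp

lemma cross_eq_length_right {A B : List ℤ} (hA : A.Nodup) (h : ∀ y ∈ B, y + 1 ∈ A) :
    cross A B = B.length := by
  rw [cross_eq_sum_map_count,
    List.map_congr_left fun y hy => List.count_eq_one_of_mem hA (h y hy)]
  simp

lemma di_append (A B : List ℤ) : di (A ++ B) = di A + di B + cross A B := by
  induction A with
  | nil => simp [cross]
  | cons a A ih =>
    simp only [List.cons_append, di_cons, ih, cross_cons_left, List.count_append]
    ring

lemma di_append_swap (u v w z : List ℤ) (h : cross v w = cross w v) :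
    di (u ++ v ++ w ++ z) = di (u ++ w ++ v ++ z) := by
  simp only [di_append, cross_append_left]
  omega

lemma di_append_swap_of_le (u v w z : List ℤ) (h : ∀ x ∈ v, ∀ y ∈ w, x + 2 ≤ y) :
    di (u ++ v ++ w ++ z) = di (u ++ w ++ v ++ z) := by
  refine di_append_swap u v w z ?_
  rw [cross_eq_zero, cross_eq_zero]
  · intro y hy hx
    have := h _ hx y hy
    omega
  · intro x hx hy
    have := h x hx _ hy
    omega

lemma dualDyck_iff_pairwise {L : List ℤ} : DualDyck L ↔ L.Pairwise (fun a b => a + 2 ≤ b) :=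
  have : Trans (fun a b : ℤ => a + 2 ≤ b) (fun a b => a + 2 ≤ b) (fun a b => a + 2 ≤ b) :=
    ⟨fun h₁ h₂ => by omega⟩
  List.isChain_iff_pairwise

lemma dualDyck_cons {a : ℤ} {L : List ℤ} :
    DualDyck (a :: L) ↔ (∀ y ∈ L, a + 2 ≤ y) ∧ DualDyck L := by
  simp only [dualDyck_iff_pairwise, List.pairwise_cons]

lemma dualDyck_append {A B : List ℤ} :
    DualDyck (A ++ B) ↔ DualDyck A ∧ DualDyck B ∧ ∀ x ∈ A, ∀ y ∈ B, x + 2 ≤ y := by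
  simp only [dualDyck_iff_pairwise, List.pairwise_append]

lemma dualDyck_singleton (a : ℤ) : DualDyck [a] := by
  simp [dualDyck_iff_pairwise]

lemma DualDyck.drop {L : List ℤ} (h : DualDyck L) (n : ℕ) : DualDyck (L.drop n) :=
  dualDyck_iff_pairwise.2 (dualDyck_iff_pairwise.1 h).drop

lemma DualDyck.nodup {L : List ℤ} (h : DualDyck L) : L.Nodup :=
  (dualDyck_iff_pairwise.1 h).imp fun _ => by omega

def chainFrom (c : ℤ) : ℕ → List ℤ
  | 0 => []
  | n + 1 => c :: chainFrom (c + 2) n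

@[simp] lemma length_chainFrom (c : ℤ) (n : ℕ) : (chainFrom c n).length = n := by
  induction n generalizing c <;> simp [chainFrom, *]

lemma mem_chainFrom {c x : ℤ} {n : ℕ} : x ∈ chainFrom c n ↔ ∃ t < n, x = c + 2 * t := by
  induction n generalizing c with
  | zero => simp [chainFrom]
  | succ n ih =>
    simp only [chainFrom, List.mem_cons, ih]
    constructor
    · rintro (rfl | ⟨t, ht, rfl⟩)
      · exact ⟨0, by omega, by simp⟩
      · exact ⟨t + 1, by omega, by push_cast; ring⟩
    · rintro ⟨_ | t, ht, rfl⟩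
      · simp
      · exact Or.inr ⟨t, by omega, by push_cast; ring⟩

lemma dualDyck_chainFrom (c : ℤ) (n : ℕ) : DualDyck (chainFrom c n) := by
  induction n generalizing c with
  | zero => simp [chainFrom, dualDyck_iff_pairwise]
  | succ n ih =>
    refine dualDyck_cons.2 ⟨fun y hy => ?_, ih _⟩
    obtain ⟨t, -, rfl⟩ := mem_chainFrom.1 hy
    omega

lemma take_chainFrom {c : ℤ} {m n : ℕ} (h : m ≤ n) : (chainFrom c n).take m = chainFrom c m := by
  induction m generalizing c n with
  | zero => simp [chainFrom]
  | succ m ih =>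
    obtain ⟨n, rfl⟩ : ∃ n', n = n' + 1 := ⟨n - 1, by omega⟩
    simp [chainFrom, ih (Nat.le_of_succ_le_succ h)]

lemma cross_chainFrom_comm {c : ℤ} {j k : ℕ} (hkj : k < j) :
    cross (chainFrom c j) (chainFrom (c + 1) k) = cross (chainFrom (c + 1) k) (chainFrom c j) := by
  rw [cross_eq_length_right (dualDyck_chainFrom c j).nodup,
    cross_eq_length_left (dualDyck_chainFrom c j).nodup]
  all_goals
    intro x hx
    obtain ⟨t, ht, rfl⟩ := mem_chainFrom.1 hx
  · exact mem_chainFrom.2 ⟨t, by omega, by ring⟩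
  · exact mem_chainFrom.2 ⟨t + 1, by omega, by push_cast; ring⟩

lemma one_le_chainUp_cons (c : ℤ) (L : List ℤ) : 1 ≤ chainUp (c :: L) := by
  cases L with
  | nil => simp [chainUp]
  | cons b t => rw [chainUp]; split_ifs <;> omega

lemma chainUp_spec {c : ℤ} {L : List ℤ} (h : DualDyck (c :: L)) :
    ∃ M, c :: L = chainFrom c (chainUp (c :: L)) ++ M ∧
      ∀ y ∈ M, c + 2 * chainUp (c :: L) + 1 ≤ y := by
  induction L generalizing c with
  | nil => exact ⟨[], by simp [chainUp, chainFrom], by simp⟩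
  | cons b t ih =>
    obtain ⟨hc, hbt⟩ := dualDyck_cons.1 h
    rw [chainUp]
    split_ifs with hb
    · obtain ⟨M, hM, hMb⟩ := ih hbt
      refine ⟨M, by rw [chainFrom, ← hb, List.cons_append, ← hM], fun y hy => ?_⟩
      have := hMb y hy
      push_cast
      omega
    · refine ⟨b :: t, by simp [chainFrom], fun y hy => ?_⟩
      have hcb := hc b List.mem_cons_self
      rcases List.mem_cons.1 hy with rfl | hy
      · omega
      · have := (dualDyck_cons.1 hbt).1 y hy
        omega

lemma rowsertStep_of_forall_lt {R F : List ℤ} {a : ℤ} (h : ∀ x ∈ R, x + 1 < a) :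
    rowsertStep R a F = ([], R ++ [a], F) := by
  rw [rowsertStep, List.findIdx?_eq_none_iff.2 fun x hx => by simpa using h x hx]

lemma rowsertStep_append_cons {T D F : List ℤ} {r a : ℤ} (hT : ∀ x ∈ T, x + 1 < a)
    (ha : a ≤ r + 1) :
    rowsertStep (T ++ r :: D) a F =
      if a ≤ r then ([r], T ++ a :: D, F)
      else if chainUp (r :: D) ≤ chainUp (a :: F) then
        ((r :: D).take (chainUp (r :: D)),
          T ++ (a :: F).take (chainUp (r :: D)) ++ (r :: D).drop (chainUp (r :: D)),
          (a :: F).drop (chainUp (r :: D)))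
      else ((a :: F).take (chainUp (a :: F)), T ++ r :: D, (a :: F).drop (chainUp (a :: F))) := by
  have hfind : (T ++ r :: D).findIdx? (fun x => decide (a ≤ x + 1)) = some T.length := by
    rw [List.findIdx?_append, List.findIdx?_eq_none_iff.2 fun x hx => by simpa using hT x hx,
      List.findIdx?_cons, if_pos (by simpa using ha)]
    simp
  simp [rowsertStep, hfind, ← List.drop_drop]

lemma forall_lt_or_exists_append_cons (R : List ℤ) (a : ℤ) :
    (∀ x ∈ R, x + 1 < a) ∨
      ∃ T r D, R = T ++ r :: D ∧ (∀ x ∈ T, x + 1 < a) ∧ a ≤ r + 1 := by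
  rcases h : R.find? (fun x => decide (a ≤ x + 1)) with _ | r
  · exact Or.inl fun x hx => by simpa using List.find?_eq_none.1 h x hx
  · obtain ⟨hr, T, D, rfl, hT⟩ := List.find?_eq_some_iff_append.1 h
    exact Or.inr ⟨T, r, D, rfl, fun x hx => by simpa using hT x hx, by simpa using hr⟩

/-- `s = (X, R', F')` is the output of a step on row `R` and input `a :: F`; `E` stands for
the word evicted before that step. -/
structure DiStep (R : List ℤ) (a : ℤ) (F : List ℤ) (s : List ℤ × List ℤ × List ℤ) : Prop where
  dualDyck_row : DualDyck s.2.1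
  dualDyck_input : DualDyck s.2.2
  length_input_le : s.2.2.length ≤ F.length
  di_eq : ∀ E, di (E ++ s.1 ++ s.2.1 ++ s.2.2) = di (E ++ R ++ a :: F)

lemma diStep_append_singleton {R F : List ℤ} {a : ℤ} (hR : DualDyck R)
    (hF : DualDyck (a :: F)) (h : ∀ x ∈ R, x + 1 < a) : DiStep R a F ([], R ++ [a], F) where
  dualDyck_row := dualDyck_append.2 ⟨hR, dualDyck_singleton a, fun x hx y hy => by
    rw [List.mem_singleton.1 hy]
    have := h x hx
    omega⟩
  dualDyck_input := (dualDyck_cons.1 hF).2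
  length_input_le := le_rfl
  di_eq E := by simp

lemma diStep_set {T D F : List ℤ} {r a : ℤ} (hR : DualDyck (T ++ r :: D))
    (hF : DualDyck (a :: F)) (hT : ∀ x ∈ T, x + 1 < a) (har : a ≤ r) :
    DiStep (T ++ r :: D) a F ([r], T ++ a :: D, F) := by
  obtain ⟨hT', hrD, hTr⟩ := dualDyck_append.1 hR
  obtain ⟨hr, hD⟩ := dualDyck_cons.1 hrD
  refine ⟨dualDyck_append.2 ⟨hT', dualDyck_cons.2 ⟨fun y hy => ?_, hD⟩, fun x hx y hy => ?_⟩,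
    (dualDyck_cons.1 hF).2, le_rfl, fun E => ?_⟩
  · have := hr y hy
    omega
  · rcases List.mem_cons.1 hy with rfl | hy
    · have := hT x hx
      omega
    · exact hTr x hx y (List.mem_cons_of_mem r hy)
  · calc di (E ++ [r] ++ (T ++ a :: D) ++ F)
        = di (E ++ [r] ++ T ++ [a] ++ D ++ F) := by simp
      _ = di (E ++ [r] ++ T ++ D ++ [a] ++ F) := by
        refine di_append_swap_of_le (E ++ [r] ++ T) [a] D F fun x hx y hy => ?_
        rw [List.mem_singleton.1 hx]
        have := hr y hy
        omega
      _ = di (E ++ T ++ [r] ++ (D ++ a :: F)) := by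
        simpa using (di_append_swap_of_le E T [r] (D ++ a :: F) fun x hx y hy =>
          List.mem_singleton.1 hy ▸ hTr x hx r List.mem_cons_self).symm
      _ = di (E ++ (T ++ r :: D) ++ a :: F) := by simp

lemma diStep_replace_chain {T D F : List ℤ} {r : ℤ} (hR : DualDyck (T ++ r :: D))
    (hF : DualDyck ((r + 1) :: F)) (hjk : chainUp (r :: D) ≤ chainUp ((r + 1) :: F)) :
    DiStep (T ++ r :: D) (r + 1) F
      ((r :: D).take (chainUp (r :: D)),
        T ++ ((r + 1) :: F).take (chainUp (r :: D)) ++ (r :: D).drop (chainUp (r :: D)),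
        ((r + 1) :: F).drop (chainUp (r :: D))) := by
  obtain ⟨hT, hrD, hTD⟩ := dualDyck_append.1 hR
  obtain ⟨R₂, hD, hR₂⟩ := chainUp_spec hrD
  obtain ⟨N, hFN, -⟩ := chainUp_spec hF
  have hj := one_le_chainUp_cons r D
  set j := chainUp (r :: D)
  have hA : ((r + 1) :: F).take j = chainFrom (r + 1) j := by
    rw [hFN, List.take_append_of_le_length (by simpa using hjk), take_chainFrom hjk]
  have hFsplit : (r + 1) :: F = chainFrom (r + 1) j ++ ((r + 1) :: F).drop j := by
    rw [← hA, List.take_append_drop]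
  have hTr : ∀ x ∈ T, x + 2 ≤ r := fun x hx => hTD x hx r List.mem_cons_self
  have hAR₂ : ∀ x ∈ chainFrom (r + 1) j, ∀ y ∈ R₂, x + 2 ≤ y := by
    intro x hx y hy
    obtain ⟨t, ht, rfl⟩ := mem_chainFrom.1 hx
    have := hR₂ y hy
    omega
  rw [hD, List.take_left' (length_chainFrom r j), List.drop_left' (length_chainFrom r j), hA]
  rw [hD] at hrD hTD
  refine ⟨?_, hF.drop j, by simp; omega, fun E => ?_⟩
  · refine dualDyck_append.2 ⟨dualDyck_append.2 ⟨hT, dualDyck_chainFrom _ _, fun x hx y hy => ?_⟩,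
      (dualDyck_append.1 hrD).2.1, fun x hx y hy => ?_⟩
    · obtain ⟨t, -, rfl⟩ := mem_chainFrom.1 hy
      have := hTr x hx
      omega
    · rcases List.mem_append.1 hx with hx | hx
      · exact hTD x hx y (List.mem_append_right _ hy)
      · exact hAR₂ x hx y hy
  · conv_rhs => rw [hFsplit]
    calc di (E ++ chainFrom r j ++ (T ++ chainFrom (r + 1) j ++ R₂) ++ ((r + 1) :: F).drop j)
        = di (E ++ chainFrom r j ++ T ++ chainFrom (r + 1) j ++ R₂ ++ ((r + 1) :: F).drop j) := by
          simp
      _ = di (E ++ chainFrom r j ++ T ++ R₂ ++ chainFrom (r + 1) j ++ ((r + 1) :: F).drop j) :=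
          di_append_swap_of_le _ _ _ _ hAR₂
      _ = di (E ++ T ++ chainFrom r j ++ (R₂ ++ chainFrom (r + 1) j ++ ((r + 1) :: F).drop j)) := by
          simpa using (di_append_swap_of_le E T (chainFrom r j) _ fun x hx y hy =>
            hTD x hx y (List.mem_append_left _ hy)).symm
      _ = _ := by simp

lemma diStep_exchange_chains {T D F : List ℤ} {r : ℤ} (hR : DualDyck (T ++ r :: D))
    (hF : DualDyck ((r + 1) :: F)) (hkj : chainUp ((r + 1) :: F) < chainUp (r :: D)) :
    DiStep (T ++ r :: D) (r + 1) F
      (((r + 1) :: F).take (chainUp ((r + 1) :: F)), T ++ r :: D,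
        ((r + 1) :: F).drop (chainUp ((r + 1) :: F))) := by
  obtain ⟨-, hrD, hTD⟩ := dualDyck_append.1 hR
  obtain ⟨R₂, hD, hR₂⟩ := chainUp_spec hrD
  obtain ⟨G, hFG, -⟩ := chainUp_spec hF
  have hk := one_le_chainUp_cons (r + 1) F
  set j := chainUp (r :: D)
  set k := chainUp ((r + 1) :: F)
  refine ⟨hR, hF.drop k, by simp; omega, fun E => ?_⟩
  have hTA : ∀ x ∈ T, ∀ y ∈ chainFrom (r + 1) k, x + 2 ≤ y := by
    intro x hx y hy
    obtain ⟨t, -, rfl⟩ := mem_chainFrom.1 hy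
    have := hTD x hx r List.mem_cons_self
    omega
  have hAR₂ : ∀ x ∈ chainFrom (r + 1) k, ∀ y ∈ R₂, x + 2 ≤ y := by
    intro x hx y hy
    obtain ⟨t, ht, rfl⟩ := mem_chainFrom.1 hx
    have := hR₂ y hy
    omega
  dsimp only
  rw [hFG, List.take_left' (length_chainFrom _ _), List.drop_left' (length_chainFrom _ _), hD]
  calc di (E ++ chainFrom (r + 1) k ++ (T ++ (chainFrom r j ++ R₂)) ++ G)
      = di (E ++ chainFrom (r + 1) k ++ T ++ (chainFrom r j ++ R₂ ++ G)) := by simp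
    _ = di (E ++ T ++ chainFrom (r + 1) k ++ (chainFrom r j ++ R₂ ++ G)) :=
        (di_append_swap_of_le E T _ _ hTA).symm
    _ = di (E ++ T ++ chainFrom (r + 1) k ++ chainFrom r j ++ (R₂ ++ G)) := by simp
    _ = di (E ++ T ++ chainFrom r j ++ chainFrom (r + 1) k ++ (R₂ ++ G)) :=
        di_append_swap _ _ _ _ (cross_chainFrom_comm hkj).symm
    _ = di (E ++ T ++ chainFrom r j ++ chainFrom (r + 1) k ++ R₂ ++ G) := by simp
    _ = di (E ++ T ++ chainFrom r j ++ R₂ ++ chainFrom (r + 1) k ++ G) :=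
        di_append_swap_of_le _ _ _ _ hAR₂
    _ = di (E ++ (T ++ (chainFrom r j ++ R₂)) ++ (chainFrom (r + 1) k ++ G)) := by simp

lemma diStep_rowsertStep {R F : List ℤ} {a : ℤ} (hR : DualDyck R) (hF : DualDyck (a :: F)) :
    DiStep R a F (rowsertStep R a F) := by
  rcases forall_lt_or_exists_append_cons R a with h | ⟨T, r, D, rfl, hT, ha⟩
  · rw [rowsertStep_of_forall_lt h]
    exact diStep_append_singleton hR hF h
  · rw [rowsertStep_append_cons hT ha]
    split_ifs with har hjk
    · exact diStep_set hR hF hT har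
    · obtain rfl : a = r + 1 := by omega
      exact diStep_replace_chain hR hF hjk
    · obtain rfl : a = r + 1 := by omega
      exact diStep_exchange_chains hR hF (not_le.1 hjk)

lemma di_rowsertAux (n : ℕ) (E R F : List ℤ) (hR : DualDyck R) (hF : DualDyck F)
    (hn : F.length ≤ n) :
    di ((rowsertAux n E R F).1 ++ (rowsertAux n E R F).2) = di (E ++ R ++ F) := by
  induction n generalizing E R F with
  | zero => simp_all [rowsertAux]
  | succ n ih =>
    cases F with
    | nil => simp [rowsertAux]
    | cons a F =>
      have step := diStep_rowsertStep hR hF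
      rw [rowsertAux, ih _ _ _ step.dualDyck_row step.dualDyck_input
        (step.length_input_le.trans (by simpa using hn)), step.di_eq]

/-- **`di`-preservation for row insertion.**  If `R₀, F₀` are dual Dyck
sequences and `rowsert(R₀, F₀) = (E, R)`, then `di (R₀ ++ F₀) = di (E ++ R)`. -/
theorem rowsert_di_preservation (R0 F0 E R : List ℤ)
    (hR0 : DualDyck R0) (hF0 : DualDyck F0)
    (h : rowsert R0 F0 = (E, R)) :
    di (R0 ++ F0) = di (E ++ R) := by
  have := di_rowsertAux F0.length [] R0 F0 hR0 hF0 le_rfl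
  rw [← rowsert, h] at this
  simpa using this.symm
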